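/- Let V' ⊆ V and let ρ̃ denote associated densities with respect to the density-based decomposition of V'. If an element u ∉ V' is added to V', then ρ̃^old_M(u) ≤ ρ̃^new_M(u) ≤ ρ̃^old_M(u) + 1; that is, the associated density of the newly inserted element increases by at most 1. -/

import Mathlib

open Matroid Set ENNReal

namespace MatroidDCS

variable {α : Type*}

/-- The rank of a set in a matroid: supremum of sizes of independent subsets. -/
noncomputable def er (M : Matroid α) (X : Set α) : ℕ∞ :=
  ⨆ I ∈ {I : Set α | M.Indep I ∧ I ⊆ X}, I.encard

/-- Contraction of a matroid by a set, defined via the dual. -/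
noncomputable def contract (M : Matroid α) (C : Set α) : Matroid α := (M✶ ↾ (M.E \ C))✶

/-- A matroid has no loops: every singleton of the ground set is independent. -/
def Loopless (M : Matroid α) : Prop := ∀ v ∈ M.E, M.Indep {v}

/-- Density of a set in a matroid, valued in `ℝ≥0∞` (so `∅` has density 0 and a
nonempty set of rank 0 has density `⊤`). -/
noncomputable def dens (M : Matroid α) (U : Set α) : ℝ≥0∞ :=
  (U.encard : ℝ≥0∞) / (er M U : ℝ≥0∞)

/-- Union of the first `j` pieces of a decomposition. -/
def pre (U : ℕ → Set α) (j : ℕ) : Set α := ⋃ i ∈ Finset.range j, U i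

/-- `W` is the maximum-cardinality densest subset of `M`. -/
def IsMaxDensest (M : Matroid α) (W : Set α) : Prop :=
  W ⊆ M.E ∧ (∀ X ⊆ M.E, dens M X ≤ dens M W) ∧
    ∀ X ⊆ M.E, dens M X = dens M W → X.encard ≤ W.encard

/-- `U 0, …, U (k-1)` is the greedy density-based decomposition of the ground set of `M'`. -/
structure IsDensityDecomp (M' : Matroid α) (k : ℕ) (U : ℕ → Set α) : Prop where
  cover : pre U k = M'.E
  densest : ∀ j < k, IsMaxDensest (contract M' (pre U j)) (U j)

open Classical in
/-- Associated density of an element `v` with respect to the decomposition `U` of `V'`. -/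
noncomputable def assocDens (M : Matroid α) (V' : Set α) (k : ℕ) (U : ℕ → Set α) (v : α) :
    ℝ≥0∞ :=
  if h : ∃ j, j < k ∧ v ∈ M.closure (pre U (j + 1)) then
    dens (contract (M ↾ V') (pre U (Nat.find h))) (U (Nat.find h))
  else 0

/-- Size of a maximum common independent set within `S`. -/
noncomputable def mu (M₁ M₂ : Matroid α) (S : Set α) : ℕ∞ :=
  ⨆ I ∈ {I : Set α | I ⊆ S ∧ M₁.Indep I ∧ M₂.Indep I}, I.encard



lemma er_mono (M : Matroid α) {X Y : Set α} (h : X ⊆ Y) : er M X ≤ er M Y := by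
  refine iSup₂_le fun I hI => ?_
  exact le_iSup₂_of_le I ⟨hI.1, hI.2.trans h⟩ le_rfl

lemma le_er_of_indep {M : Matroid α} {I X : Set α} (hI : M.Indep I) (hIX : I ⊆ X) :
    I.encard ≤ er M X :=
  le_iSup₂_of_le I ⟨hI, hIX⟩ le_rfl

lemma er_basis' {M : Matroid α} {I X : Set α} (hI : M.IsBasis' I X) : er M X = I.encard := by
  refine le_antisymm (iSup₂_le fun J hJ => ?_) (le_er_of_indep hI.indep hI.subset)
  obtain ⟨J', hJ', hJJ'⟩ := hJ.1.subset_isBasis'_of_subset hJ.2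
  exact le_of_le_of_eq (encard_le_encard hJJ') (hJ'.encard_eq_encard hI)

lemma er_indep {M : Matroid α} {I : Set α} (hI : M.Indep I) : er M I = I.encard :=
  er_basis' (hI.isBasis_self.isBasis')

@[simp] lemma er_empty (M : Matroid α) : er M ∅ = 0 := by
  simp [er_indep M.empty_indep]

lemma er_le_ground_encard (M : Matroid α) (X : Set α) : er M X ≤ M.E.encard :=
  iSup₂_le fun I hI => encard_le_encard hI.1.subset_ground

lemma er_lt_top (M : Matroid α) [M.Finite] (X : Set α) : er M X < ⊤ :=
  (er_le_ground_encard M X).trans_lt (encard_lt_top_iff.2 M.ground_finite)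

lemma er_ne_top (M : Matroid α) [M.Finite] (X : Set α) : er M X ≠ ⊤ :=
  (er_lt_top M X).ne

lemma er_submod (M : Matroid α) (X Y : Set α) :
    er M (X ∪ Y) + er M (X ∩ Y) ≤ er M X + er M Y := by
  obtain ⟨I, hI⟩ := M.exists_isBasis' (X ∩ Y)
  obtain ⟨J, hJ, hIJ⟩ := hI.indep.subset_isBasis'_of_subset
    (hI.subset.trans (inter_subset_left.trans subset_union_left))
  rw [er_basis' hI, er_basis' hJ]
  have hJXY : J ⊆ X ∪ Y := hJ.subset
  have h1 : (J ∩ X).encard + (J ∩ Y).encard = J.encard + (J ∩ (X ∩ Y)).encard := by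
    rw [← encard_union_add_encard_inter, ← inter_union_distrib_left,
      inter_eq_self_of_subset_left hJXY]
    congr 1
    rw [← inter_inter_distrib_left]
  calc er M X + er M Y ≥ (J ∩ X).encard + (J ∩ Y).encard := by
        gcongr
        · exact le_er_of_indep (hJ.indep.subset inter_subset_left) inter_subset_right
        · exact le_er_of_indep (hJ.indep.subset inter_subset_left) inter_subset_right
    _ = J.encard + (J ∩ (X ∩ Y)).encard := h1
    _ ≥ J.encard + I.encard := by
        gcongr
        exact subset_inter hIJ hI.subset

lemma er_insert_le (M : Matroid α) (u : α) (X : Set α) :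
    er M (insert u X) ≤ er M X + 1 := by
  obtain ⟨I, hI⟩ := M.exists_isBasis' X
  obtain ⟨J, hJ, hIJ⟩ := hI.indep.subset_isBasis'_of_subset
    (hI.subset.trans (subset_insert _ _))
  rw [er_basis' hI, er_basis' hJ]
  have hJX : J ∩ X = I := hI.inter_eq_of_subset_indep hIJ hJ.indep
  have : J ⊆ insert u I := by
    intro x hx
    rcases hJ.subset hx with h | h
    · exact h ▸ mem_insert _ _
    · exact mem_insert_of_mem _ (hJX ▸ ⟨hx, h⟩)
  exact (encard_le_encard this).trans (encard_insert_le _ _)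

lemma er_insert_of_not_mem_closure {M : Matroid α} {u : α} {X : Set α} (hu : u ∈ M.E)
    (hX : X ⊆ M.E) (h : u ∉ M.closure X) : er M (insert u X) = er M X + 1 := by
  obtain ⟨I, hI⟩ := M.exists_isBasis X hX
  have hcl : M.closure I = M.closure X := hI.closure_eq_closure
  have huI : u ∉ I := fun huI => h (hcl ▸ M.subset_closure I hI.indep.subset_ground huI)
  have hind : M.Indep (insert u I) := by
    rw [hI.indep.insert_indep_iff_of_notMem huI]
    exact ⟨hu, fun hc => h (hcl ▸ hc)⟩
  have hbas : M.IsBasis (insert u I) (insert u X) := by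
    refine hind.isBasis_of_subset_of_subset_closure (insert_subset_insert hI.subset) ?_
    refine insert_subset (M.subset_closure _ hind.subset_ground (mem_insert _ _)) ?_
    exact (hI.subset_closure).trans
      (M.closure_subset_closure (subset_insert _ _))
  rw [er_basis' hbas.isBasis', er_basis' hI.isBasis', encard_insert_of_notMem huI]

lemma er_restrict (M : Matroid α) {R X : Set α} (hX : X ⊆ R) : er (M ↾ R) X = er M X := by
  refine le_antisymm (iSup₂_le fun I hI => le_iSup₂_of_le I
      ⟨(restrict_indep_iff.1 hI.1).1, hI.2⟩ le_rfl)
    (iSup₂_le fun I hI => le_iSup₂_of_le I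
      ⟨restrict_indep_iff.2 ⟨hI.1, hI.2.trans hX⟩, hI.2⟩ le_rfl)

lemma er_dual_add (M : Matroid α) {Y : Set α} (hY : Y ⊆ M.E) :
    er M✶ Y + er M M.E = Y.encard + er M (M.E \ Y) := by
  obtain ⟨J, hJ⟩ := M.exists_isBasis' (M.E \ Y)
  obtain ⟨B, hB, hJB⟩ := hJ.indep.exists_isBase_superset
  have hBJ : B ∩ (M.E \ Y) = J := hJ.inter_eq_of_subset_indep hJB hB.indep
  have hBdY : B \ Y = J := by
    rw [← hBJ, inter_diff_distrib_left, inter_eq_self_of_subset_left hB.subset_ground,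
      diff_self_inter]
  have herE : er M M.E = B.encard := by
    rw [er_basis' hB.isBasis_ground.isBasis']
  have herJ : er M (M.E \ Y) = J.encard := er_basis' hJ
  refine le_antisymm ?_ ?_
  · -- pick a dual basis of Y
    obtain ⟨I₁, hI₁⟩ := M✶.exists_isBasis' Y
    obtain ⟨hI₁E, B', hB', hdisj⟩ := dual_indep_iff_exists'.1 hI₁.indep
    have herE' : er M M.E = B'.encard := by rw [er_basis' hB'.isBasis_ground.isBasis']
    rw [er_basis' hI₁, herE']
    have h1 : I₁.encard + (B' ∩ Y).encard ≤ Y.encard := by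
      rw [← encard_union_eq (disjoint_of_subset_right inter_subset_left hdisj)]
      exact encard_le_encard (union_subset hI₁.subset inter_subset_right)
    have h2 : B'.encard = (B' \ Y).encard + (B' ∩ Y).encard := (encard_diff_add_encard_inter _ _).symm
    have h3 : (B' \ Y).encard ≤ er M (M.E \ Y) :=
      le_er_of_indep (hB'.indep.diff _) (diff_subset_diff_left hB'.subset_ground)
    calc I₁.encard + B'.encard = (I₁.encard + (B' ∩ Y).encard) + (B' \ Y).encard := by
          rw [h2]; ring
      _ ≤ Y.encard + er M (M.E \ Y) := add_le_add h1 h3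
  · have hYB : M✶.Indep (Y \ B) :=
      dual_indep_iff_exists'.2 ⟨(diff_subset.trans hY), ⟨B, hB, disjoint_sdiff_left⟩⟩
    have h4 : (Y \ B).encard ≤ er M✶ Y := le_er_of_indep hYB diff_subset
    have h5 : Y.encard + J.encard = (Y \ B).encard + B.encard := by
      rw [← hBdY, ← encard_diff_add_encard_inter Y B, ← encard_diff_add_encard_inter B Y,
        inter_comm B Y]
      ring
    rw [herE, herJ, h5]
    gcongr
lemma contract_ground (M : Matroid α) (C : Set α) : (contract M C).E = M.E \ C := rfl

lemma er_contract_add (M : Matroid α) [M.Finite] {C Y : Set α} (hC : C ⊆ M.E)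
    (hY : Y ⊆ M.E \ C) : er M C + er (contract M C) Y = er M (Y ∪ C) := by
  set D := M✶ ↾ (M.E \ C) with hD
  have hDE : D.E = M.E \ C := rfl
  have e1 : er D✶ Y + er D (M.E \ C) = Y.encard + er D ((M.E \ C) \ Y) := by
    have := er_dual_add D (show Y ⊆ D.E from hY)
    rwa [hDE] at this
  have e2 : er D (M.E \ C) = er M✶ (M.E \ C) := er_restrict M✶ Subset.rfl
  have e3 : er D ((M.E \ C) \ Y) = er M✶ ((M.E \ C) \ Y) := er_restrict M✶ diff_subset
  have e4 : er M✶ (M.E \ C) + er M M.E = (M.E \ C).encard + er M C := by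
    have := er_dual_add M (Y := M.E \ C) diff_subset
    rwa [diff_diff_cancel_left hC] at this
  have e5 : er M✶ ((M.E \ C) \ Y) + er M M.E
      = ((M.E \ C) \ Y).encard + er M (Y ∪ C) := by
    have h' := er_dual_add M (Y := (M.E \ C) \ Y) (diff_subset.trans diff_subset)
    rw [show M.E \ ((M.E \ C) \ Y) = Y ∪ C by
      rw [diff_diff, diff_diff_cancel_left (union_subset hC (hY.trans diff_subset)),
        union_comm C Y]] at h'
    exact h'
  have ecard : ((M.E \ C) \ Y).encard + Y.encard = (M.E \ C).encard :=
    encard_diff_add_encard_of_subset hY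
  have htop : (M.E \ C).encard ≠ ⊤ :=
    (encard_lt_top_iff.2 (M.ground_finite.subset diff_subset)).ne
  have key : (M.E \ C).encard + (er (contract M C) Y + er M C)
      = (M.E \ C).encard + er M (Y ∪ C) := by
    have hc : er D✶ Y + er D (M.E \ C) + er M M.E
        = Y.encard + er D ((M.E \ C) \ Y) + er M M.E := by rw [e1]
    rw [e2, e3, add_assoc, e4, add_assoc, e5, ← add_assoc, ← add_assoc] at hc
    have : er D✶ Y = er (contract M C) Y := rfl
    rw [this] at hc
    calc (M.E \ C).encard + (er (contract M C) Y + er M C)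
        = er (contract M C) Y + (M.E \ C).encard + er M C := by ring
      _ = Y.encard + ((M.E \ C) \ Y).encard + er M (Y ∪ C) := hc
      _ = (M.E \ C).encard + er M (Y ∪ C) := by
          rw [add_comm Y.encard, ecard]
  have := WithTop.add_left_cancel htop key
  rw [← this]; ring

lemma er_contract_restrict_add (M : Matroid α) [M.Finite] {V S Y : Set α} (hV : V ⊆ M.E)
    (hS : S ⊆ V) (hY : Y ⊆ V \ S) :
    er M S + er (contract (M ↾ V) S) Y = er M (Y ∪ S) := by
  haveI : (M ↾ V).Finite := ⟨by rw [restrict_ground_eq]; exact M.ground_finite.subset hV⟩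
  have h := er_contract_add (M ↾ V) (C := S) (Y := Y)
    (by rw [restrict_ground_eq]; exact hS) (by rw [restrict_ground_eq]; exact hY)
  rwa [er_restrict M hS, er_restrict M (union_subset (hY.trans diff_subset) hS)] at h

lemma contract_restrict_ground (M : Matroid α) (V S : Set α) :
    (contract (M ↾ V) S).E = V \ S := rfl

/-! ### ENNReal helpers -/

lemma card_le_of_dens_le {c d ρ : ℝ≥0∞} (hd : d ≠ ⊤) (hρ : ρ ≠ ⊤) (h : c / d ≤ ρ) :
    c ≤ ρ * d := by
  rcases eq_or_ne d 0 with rfl | hd0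
  · rcases eq_or_ne c 0 with rfl | hc
    · simp
    · rw [ENNReal.div_zero hc] at h
      exact absurd (top_le_iff.1 h) hρ
  · exact (ENNReal.div_le_iff_le_mul (Or.inl hd0) (Or.inl hd)).1 h

/-! ### Level density and basic decomposition facts -/

/-- The density of the `j`-th level of a decomposition. -/
noncomputable def lvlDens (M : Matroid α) (V : Set α) (U : ℕ → Set α) (j : ℕ) : ℝ≥0∞ :=
  dens (contract (M ↾ V) (pre U j)) (U j)

lemma coe_er_ne_top {x : ℕ∞} (h : x ≠ ⊤) : (x : ℝ≥0∞) ≠ ⊤ :=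
  fun hc => h (by rwa [← ENat.toENNReal_top, ENat.toENNReal_inj] at hc)

open Classical in
lemma assocDens_eq_lvlDens {M : Matroid α} {V : Set α} {k : ℕ} {U : ℕ → Set α} {v : α}
    (h : ∃ j, j < k ∧ v ∈ M.closure (pre U (j + 1))) :
    assocDens M V k U v = lvlDens M V U (Nat.find h) := by
  rw [assocDens, dif_pos h, lvlDens]

@[simp] lemma pre_zero (U : ℕ → Set α) : pre U 0 = ∅ := by simp [pre]

lemma pre_succ (U : ℕ → Set α) (j : ℕ) : pre U (j + 1) = pre U j ∪ U j := by
  simp only [pre, Finset.range_add_one]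
  rw [Finset.set_biUnion_insert, union_comm]

lemma pre_mono (U : ℕ → Set α) {m n : ℕ} (h : m ≤ n) : pre U m ⊆ pre U n := by
  refine iUnion₂_subset fun i hi => subset_iUnion₂_of_subset i
    (Finset.mem_range.2 ((Finset.mem_range.1 hi).trans_le h)) Subset.rfl

lemma mem_pre {U : ℕ → Set α} {m : ℕ} {x : α} : x ∈ pre U m ↔ ∃ i < m, x ∈ U i := by
  simp [pre]

section Decomp

variable {M : Matroid α} [M.Finite] {V : Set α} {k : ℕ} {U : ℕ → Set α}

lemma dens_def (K : Matroid α) (Y : Set α) :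
    dens K Y = (Y.encard : ℝ≥0∞) / (er K Y : ℝ≥0∞) := rfl

@[simp] lemma dens_empty (K : Matroid α) : dens K ∅ = 0 := by
  simp [dens_def]

lemma IsDensityDecomp.pre_eq (hD : IsDensityDecomp (M ↾ V) k U) : pre U k = V := by
  have := hD.cover; rwa [restrict_ground_eq] at this

lemma IsDensityDecomp.pre_subset (hD : IsDensityDecomp (M ↾ V) k U) {m : ℕ} (hm : m ≤ k) :
    pre U m ⊆ V :=
  (pre_mono U hm).trans hD.pre_eq.subset

lemma IsDensityDecomp.piece_subset (hD : IsDensityDecomp (M ↾ V) k U) {j : ℕ} (hj : j < k) :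
    U j ⊆ V \ pre U j := by
  have := (hD.densest j hj).1
  rwa [contract_restrict_ground] at this

/-- Additive contraction-rank formula within the decomposition. -/
lemma rk_add (hV : V ⊆ M.E) {S Y : Set α} (hS : S ⊆ V) (hY : Y ⊆ V \ S) :
    er M S + er (contract (M ↾ V) S) Y = er M (Y ∪ S) :=
  er_contract_restrict_add M hV hS hY

lemma contract_er_ne_top (hV : V ⊆ M.E) {S Y : Set α} (hS : S ⊆ V) (hY : Y ⊆ V \ S) :
    er (contract (M ↾ V) S) Y ≠ ⊤ := by
  intro h
  have h2 := rk_add hV hS hY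
  rw [h, add_top] at h2
  exact er_ne_top M _ h2.symm

/-- The densest-set upper bound at level `j`, in multiplied form. -/
lemma card_le_lvlDens_mul (hV : V ⊆ M.E) (hD : IsDensityDecomp (M ↾ V) k U) {j : ℕ}
    (hj : j < k) (hρ : lvlDens M V U j ≠ ⊤) {Y : Set α} (hY : Y ⊆ V \ pre U j) :
    (Y.encard : ℝ≥0∞) ≤ lvlDens M V U j *
      (er (contract (M ↾ V) (pre U j)) Y : ℝ≥0∞) := by
  have hb := (hD.densest j hj).2.1 Y (by rwa [contract_restrict_ground])
  refine card_le_of_dens_le ?_ hρ hb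
  exact coe_er_ne_top (contract_er_ne_top hV (hD.pre_subset hj.le) hY)

lemma nonempty_contract_er_ne_zero (hV : V ⊆ M.E) (hD : IsDensityDecomp (M ↾ V) k U) {j : ℕ}
    (hj : j < k) (hρ : lvlDens M V U j ≠ ⊤) {Y : Set α} (hY : Y ⊆ V \ pre U j)
    (hne : Y.Nonempty) : er (contract (M ↾ V) (pre U j)) Y ≠ 0 := by
  intro h0
  have hb := (hD.densest j hj).2.1 Y (by rwa [contract_restrict_ground])
  rw [dens_def, h0, ENat.toENNReal_zero] at hb
  have hcne : ((Y.encard : ℝ≥0∞)) ≠ 0 := by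
    have : Y.encard ≠ 0 := encard_ne_zero.2 hne
    intro hc
    exact this (by rwa [← ENat.toENNReal_zero, ENat.toENNReal_inj] at hc)
  rw [ENNReal.div_zero hcne] at hb
  exact hρ (top_le_iff.1 hb)

lemma piece_nonempty (hV : V ⊆ M.E) (hD : IsDensityDecomp (M ↾ V) k U) {j : ℕ}
    (hj : j < k) (hne : (V \ pre U j).Nonempty) : (U j).Nonempty := by
  by_contra h
  rw [not_nonempty_iff_eq_empty] at h
  obtain ⟨w, hw⟩ := hne
  have hb := (hD.densest j hj).2.1 {w} (by rw [contract_restrict_ground]; simpa using hw)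
  rw [h, dens_empty, le_zero_iff, dens_def, encard_singleton] at hb
  rw [ENNReal.div_eq_zero_iff] at hb
  rcases hb with h1 | h2
  · simp at h1
  · exact coe_er_ne_top (contract_er_ne_top hV (hD.pre_subset hj.le)
      (singleton_subset_iff.2 (by simpa using hw))) h2

lemma coe_ne_zero {x : ℕ∞} (h : x ≠ 0) : (x : ℝ≥0∞) ≠ 0 :=
  fun hc => h (by rwa [← ENat.toENNReal_zero, ENat.toENNReal_inj] at hc)

lemma encard_coe_ne_top (hV : V ⊆ M.E) {Y : Set α} (hY : Y ⊆ V) :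
    ((Y.encard : ℝ≥0∞)) ≠ ⊤ :=
  coe_er_ne_top (encard_lt_top_iff.2 (M.ground_finite.subset (hY.trans hV))).ne

lemma rk_level (hV : V ⊆ M.E) (hD : IsDensityDecomp (M ↾ V) k U) {j : ℕ} (hj : j < k) :
    er M (pre U j) + er (contract (M ↾ V) (pre U j)) (U j) = er M (pre U (j + 1)) := by
  have h := rk_add hV (hD.pre_subset hj.le) (hD.piece_subset hj)
  rwa [show U j ∪ pre U j = pre U (j + 1) by rw [pre_succ, union_comm]] at h

lemma lvlDens_ne_top (hM : Loopless M) (hV : V ⊆ M.E) (hD : IsDensityDecomp (M ↾ V) k U) :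
    ∀ j, j < k → lvlDens M V U j ≠ ⊤ := by
  intro j
  induction j using Nat.strong_induction_on with
  | _ j IH =>
  intro hj
  rcases eq_empty_or_nonempty (U j) with hUe | hUne
  · rw [lvlDens, hUe, dens_empty]; exact ENNReal.zero_ne_top
  · have hUj := hD.piece_subset hj
    suffices hdd : er (contract (M ↾ V) (pre U j)) (U j) ≠ 0 by
      rw [lvlDens, dens_def]
      intro hc
      rcases ENNReal.div_eq_top.1 hc with ⟨_, h2⟩ | ⟨h3, _⟩
      · exact coe_ne_zero hdd h2
      · exact encard_coe_ne_top hV (hUj.trans diff_subset) h3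
    intro h0
    have hlev := rk_level hV hD hj
    rw [h0, add_zero] at hlev
    obtain ⟨v, hv⟩ := hUne
    have hvV : v ∈ V \ pre U j := hUj hv
    have hvpre : v ∈ pre U (j + 1) := by rw [pre_succ]; exact Or.inr hv
    match j, hj, hlev, hvV, hvpre with
    | 0, hj, hlev, hvV, hvpre =>
      have h1 : (1 : ℕ∞) ≤ er M (pre U 1) := by
        rw [← encard_singleton v]
        exact le_er_of_indep (hM v (hV hvV.1)) (singleton_subset_iff.2 hvpre)
      rw [← hlev] at h1
      simp at h1
    | (i+1), hj, hlev, hvV, hvpre =>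
      have hik : i < k := (Nat.lt_succ_self i).trans hj
      have hvnp : v ∉ pre U (i + 1) := hvV.2
      have hvnpi : v ∉ pre U i := fun hc => hvnp (pre_mono U (Nat.le_succ i) hc)
      have hUine : (U i).Nonempty := piece_nonempty hV hD hik ⟨v, hvV.1, hvnpi⟩
      have hUi := hD.piece_subset hik
      have hvnUi : v ∉ U i := fun hc => hvnp (by rw [pre_succ]; exact Or.inr hc)
      set X : Set α := U i ∪ {v} with hX
      have hXsub : X ⊆ V \ pre U i :=
        union_subset hUi (singleton_subset_iff.2 ⟨hvV.1, hvnpi⟩)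
      -- rank of X ∪ pre U i equals rank of pre U (i+1)
      have hUipre : U i ⊆ pre U (i + 1) := by rw [pre_succ]; exact subset_union_right
      have hp12 : pre U (i + 1) ⊆ pre U (i + 2) := pre_mono U (by omega)
      have hsq : er M (X ∪ pre U i) = er M (pre U (i + 1)) := by
        refine le_antisymm ?_ (er_mono M (by
          rw [pre_succ]
          exact union_subset subset_union_right
            ((subset_union_left.trans subset_union_left : U i ⊆ X ∪ pre U i))))
        · have hss : X ∪ pre U i ⊆ pre U (i + 2) := by
            refine union_subset (union_subset (hUipre.trans hp12)
              (singleton_subset_iff.2 hvpre)) (pre_mono U (by omega))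
          exact (er_mono M hss).trans_eq hlev.symm
      have hadd := rk_add hV (hD.pre_subset hik.le) hXsub
      have haddi := rk_level hV hD hik
      rw [hsq, ← haddi] at hadd
      have hdX : er (contract (M ↾ V) (pre U i)) X
          = er (contract (M ↾ V) (pre U i)) (U i) :=
        WithTop.add_left_cancel (er_ne_top M _) hadd
      -- density bound
      have htopi : lvlDens M V U i ≠ ⊤ := IH i (Nat.lt_succ_self i) hik
      have hbd := card_le_lvlDens_mul hV hD hik htopi hXsub
      rw [hdX] at hbd
      have hddi0 : er (contract (M ↾ V) (pre U i)) (U i) ≠ 0 :=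
        nonempty_contract_er_ne_zero hV hD hik htopi hUi hUine
      have hddit : er (contract (M ↾ V) (pre U i)) (U i) ≠ ⊤ :=
        contract_er_ne_top hV (hD.pre_subset hik.le) hUi
      have hmul : lvlDens M V U i * (er (contract (M ↾ V) (pre U i)) (U i) : ℝ≥0∞)
          = ((U i).encard : ℝ≥0∞) := by
        rw [lvlDens, dens_def]
        exact ENNReal.div_mul_cancel (coe_ne_zero hddi0) (coe_er_ne_top hddit)
      rw [hmul] at hbd
      have hcard : X.encard = (U i).encard + 1 := by
        rw [hX, union_singleton, encard_insert_of_notMem hvnUi]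
      rw [hcard] at hbd
      push_cast at hbd
      have hfin : ((U i).encard : ℝ≥0∞) ≠ ⊤ := encard_coe_ne_top hV (hUi.trans diff_subset)
      exact absurd hbd (ENNReal.lt_add_right hfin one_ne_zero).not_ge

lemma lvl_mul (hM : Loopless M) (hV : V ⊆ M.E) (hD : IsDensityDecomp (M ↾ V) k U) {j : ℕ}
    (hj : j < k) :
    lvlDens M V U j * (er (contract (M ↾ V) (pre U j)) (U j) : ℝ≥0∞)
      = ((U j).encard : ℝ≥0∞) := by
  rcases eq_empty_or_nonempty (U j) with hUe | hUne
  · rw [lvlDens, hUe, dens_empty, zero_mul, encard_empty]; simp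
  · rw [lvlDens, dens_def]
    exact ENNReal.div_mul_cancel
      (coe_ne_zero (nonempty_contract_er_ne_zero hV hD hj (lvlDens_ne_top hM hV hD j hj)
        (hD.piece_subset hj) hUne))
      (coe_er_ne_top (contract_er_ne_top hV (hD.pre_subset hj.le) (hD.piece_subset hj)))

lemma lvl_antitone (hM : Loopless M) (hV : V ⊆ M.E) (hD : IsDensityDecomp (M ↾ V) k U)
    {i j : ℕ} (hij : i ≤ j) (hj : j < k) : lvlDens M V U j ≤ lvlDens M V U i := by
  induction j, hij using Nat.le_induction with
  | base => exact le_rfl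
  | succ n hn IH =>
    refine le_trans ?_ (IH ((Nat.lt_succ_self n).trans hj))
    -- single step : lvlDens (n+1) ≤ lvlDens n
    rcases eq_empty_or_nonempty (U (n+1)) with hUe | hUne
    · rw [lvlDens, hUe, dens_empty]; exact zero_le
    · have hnk : n < k := (Nat.lt_succ_self n).trans hj
      have hUn1 := hD.piece_subset hj
      have hUn := hD.piece_subset hnk
      obtain ⟨v, hv⟩ := hUne
      have hUnne : (U n).Nonempty := piece_nonempty hV hD hnk
        ⟨v, (hUn1 hv).1, fun hc => (hUn1 hv).2 (pre_mono U (Nat.le_succ n) hc)⟩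
      set X : Set α := U n ∪ U (n+1) with hX
      have hXsub : X ⊆ V \ pre U n := union_subset hUn
        (fun x hx => ⟨(hUn1 hx).1, fun hc => (hUn1 hx).2 (pre_mono U (Nat.le_succ n) hc)⟩)
      have hadd := rk_add hV (hD.pre_subset hnk.le) hXsub
      have h1 := rk_level hV hD hnk
      have h2 := rk_level hV hD hj
      have hXun : X ∪ pre U n = pre U (n + 2) := by
        rw [pre_succ, pre_succ, hX]
        ac_rfl
      rw [hXun, ← h2, ← h1] at hadd
      set dn := er (contract (M ↾ V) (pre U n)) (U n)
      set dn1 := er (contract (M ↾ V) (pre U (n+1))) (U (n+1))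
      have hdX : er (contract (M ↾ V) (pre U n)) X = dn + dn1 := by
        rw [add_assoc] at hadd
        exact WithTop.add_left_cancel (er_ne_top M _) hadd
      have htn : lvlDens M V U n ≠ ⊤ := lvlDens_ne_top hM hV hD n hnk
      have hbd := card_le_lvlDens_mul hV hD hnk htn hXsub
      rw [hdX] at hbd
      have hUnpre : U n ⊆ pre U (n + 1) := by rw [pre_succ]; exact subset_union_right
      have hdisj : Disjoint (U n) (U (n + 1)) :=
        (((subset_diff.1 hUn1).2).mono_right hUnpre).symm
      have hcard : X.encard = (U n).encard + (U (n + 1)).encard := by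
        rw [hX, encard_union_eq hdisj]
      rw [hcard] at hbd
      push_cast at hbd
      rw [mul_add, lvl_mul hM hV hD hnk] at hbd
      have hcnfin : (((U n).encard : ℝ≥0∞)) ≠ ⊤ :=
        encard_coe_ne_top hV (hUn.trans diff_subset)
      have hbd2 : (((U (n+1)).encard : ℝ≥0∞)) ≤ lvlDens M V U n * (dn1 : ℝ≥0∞) :=
        (ENNReal.add_le_add_iff_left hcnfin).1 hbd
      have htn1 : lvlDens M V U (n+1) ≠ ⊤ := lvlDens_ne_top hM hV hD (n+1) hj
      have hdn1_0 : dn1 ≠ 0 :=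
        nonempty_contract_er_ne_zero hV hD hj htn1 hUn1 ⟨v, hv⟩
      have hdn1_t : dn1 ≠ ⊤ := contract_er_ne_top hV (hD.pre_subset hj.le) hUn1
      rw [lvlDens, dens_def]
      exact (ENNReal.div_le_iff_le_mul (Or.inl (coe_ne_zero hdn1_0))
        (Or.inl (coe_er_ne_top hdn1_t))).2 hbd2
lemma exists_cut (k : ℕ) (P : ℕ → Prop) :
    ∃ m, m ≤ k ∧ (∀ i < m, ¬ P i) ∧ (m = k ∨ (m < k ∧ P m)) := by
  classical
  by_cases h : ∃ i, i < k ∧ P i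
  · have hspec := Nat.find_spec h
    refine ⟨Nat.find h, hspec.1.le, fun i hi hPi => ?_, Or.inr ⟨hspec.1, hspec.2⟩⟩
    exact Nat.find_min h hi ⟨hi.trans_le hspec.1.le, hPi⟩
  · exact ⟨k, le_rfl, fun i hik hPi => h ⟨i, hik, hPi⟩, Or.inl rfl⟩

/-- Hereditary density of a prefix: the prefix is `lam`-dense against any contraction. -/
lemma hered (hM : Loopless M) (hV : V ⊆ M.E) (hD : IsDensityDecomp (M ↾ V) k U)
    {lam : ℝ≥0∞} (hlt : lam ≠ ⊤) {m : ℕ} (hm : m ≤ k)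
    (hlvl : ∀ i < m, lam ≤ lvlDens M V U i) {X : Set α} (hX : X ⊆ M.E) :
    lam * (er M (pre U m ∪ X) : ℝ≥0∞)
      ≤ ((pre U m \ X).encard : ℝ≥0∞) + lam * (er M X : ℝ≥0∞) := by
  induction m with
  | zero => simp
  | succ m IHm =>
    have hmk : m < k := hm
    have IH := IHm hmk.le (fun i hi => hlvl i (hi.trans (Nat.lt_succ_self m)))
    set S := pre U m with hS
    set A := U m with hA'
    set ρ := lvlDens M V U m with hρ
    have hρtop : ρ ≠ ⊤ := lvlDens_ne_top hM hV hD m hmk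
    have hlam : lam ≤ ρ := hlvl m (Nat.lt_succ_self m)
    have hSV : S ⊆ V := hD.pre_subset hmk.le
    have hA : A ⊆ V \ S := hD.piece_subset hmk
    have hAX : A ∩ X ⊆ V \ S := inter_subset_left.trans hA
    have hpre1 : pre U (m + 1) = S ∪ A := pre_succ U m
    set dA := er (contract (M ↾ V) S) A with hdA
    set dq := er (contract (M ↾ V) S) (A ∩ X) with hdq
    have hp : er M S + dA = er M (S ∪ A) := by
      have := rk_add hV hSV hA; rwa [union_comm A S] at this
    have hq : er M S + dq = er M (S ∪ (A ∩ X)) := by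
      have := rk_add hV hSV hAX; rwa [union_comm (A ∩ X) S] at this
    have hdqdA : dq ≤ dA := er_mono _ inter_subset_left
    have hdAt : dA ≠ ⊤ := contract_er_ne_top hV hSV hA
    have hdqt : dq ≠ ⊤ := contract_er_ne_top hV hSV hAX
    -- submodularity
    have hsub : er M ((S ∪ A) ∪ X) + er M (S ∪ (A ∩ X)) ≤ er M (S ∪ A) + er M (S ∪ X) := by
      have h1 := er_submod M (S ∪ A) (S ∪ X)
      have e1 : (S ∪ A) ∪ (S ∪ X) = (S ∪ A) ∪ X := by ext x; simp; tauto
      have e2 : S ∪ (A ∩ X) ⊆ (S ∪ A) ∩ (S ∪ X) :=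
        subset_inter (union_subset_union_right _ inter_subset_left)
          (union_subset_union_right _ inter_subset_right)
      rw [e1] at h1
      exact le_trans (add_le_add_right (er_mono M e2) _) h1
    -- densest bound and level identity
    have hbq : (((A ∩ X).encard : ℝ≥0∞)) ≤ ρ * (dq : ℝ≥0∞) :=
      card_le_lvlDens_mul hV hD hmk hρtop hAX
    have hlevid : ρ * (dA : ℝ≥0∞) = (A.encard : ℝ≥0∞) := lvl_mul hM hV hD hmk
    have hcA : (A.encard : ℝ≥0∞)
        = ((A \ X).encard : ℝ≥0∞) + ((A ∩ X).encard : ℝ≥0∞) := by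
      have := encard_diff_add_encard_inter A X
      exact_mod_cast this.symm
    set δ := dA - dq with hδdef
    have hδ : dq + δ = dA := add_tsub_cancel_of_le hdqdA
    have hsplit : ∀ c : ℝ≥0∞, c * (dA : ℝ≥0∞) = c * (dq : ℝ≥0∞) + c * (δ : ℝ≥0∞) := by
      intro c
      rw [← mul_add]
      congr 1
      exact_mod_cast hδ.symm
    have key1 : ρ * (δ : ℝ≥0∞) ≤ ((A \ X).encard : ℝ≥0∞) := by
      have h0 : ρ * (dq : ℝ≥0∞) + ρ * (δ : ℝ≥0∞)
          ≤ ρ * (dq : ℝ≥0∞) + ((A \ X).encard : ℝ≥0∞) := by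
        calc ρ * (dq : ℝ≥0∞) + ρ * (δ : ℝ≥0∞) = ρ * (dA : ℝ≥0∞) := (hsplit ρ).symm
          _ = ((A \ X).encard : ℝ≥0∞) + ((A ∩ X).encard : ℝ≥0∞) := by rw [hlevid, hcA]
          _ ≤ ((A \ X).encard : ℝ≥0∞) + ρ * (dq : ℝ≥0∞) := add_le_add_right hbq _
          _ = ρ * (dq : ℝ≥0∞) + ((A \ X).encard : ℝ≥0∞) := add_comm _ _
      exact (ENNReal.add_le_add_iff_left
        (ENNReal.mul_ne_top hρtop (coe_er_ne_top hdqt))).1 h0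
    have key2 : lam * (dA : ℝ≥0∞) ≤ ((A \ X).encard : ℝ≥0∞) + lam * (dq : ℝ≥0∞) := by
      calc lam * (dA : ℝ≥0∞) = lam * (dq : ℝ≥0∞) + lam * (δ : ℝ≥0∞) := hsplit lam
        _ ≤ lam * (dq : ℝ≥0∞) + ρ * (δ : ℝ≥0∞) :=
            add_le_add_right (mul_le_mul_left hlam _) _
        _ ≤ lam * (dq : ℝ≥0∞) + ((A \ X).encard : ℝ≥0∞) := add_le_add_right key1 _
        _ = _ := add_comm _ _
    -- main chain
    have hqc : (er M (S ∪ (A ∩ X)) : ℝ≥0∞) = (er M S : ℝ≥0∞) + (dq : ℝ≥0∞) := by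
      exact_mod_cast hq.symm
    have hpc : (er M (S ∪ A) : ℝ≥0∞) = (er M S : ℝ≥0∞) + (dA : ℝ≥0∞) := by
      exact_mod_cast hp.symm
    have hsub' : (er M ((S ∪ A) ∪ X) : ℝ≥0∞) + ((er M S : ℝ≥0∞) + (dq : ℝ≥0∞))
        ≤ ((er M S : ℝ≥0∞) + (dA : ℝ≥0∞)) + (er M (S ∪ X) : ℝ≥0∞) := by
      rw [← hqc, ← hpc]
      exact_mod_cast hsub
    have h3 := mul_le_mul_right hsub' lam
    rw [mul_add, mul_add, mul_add, mul_add] at h3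
    set g := (er M ((S ∪ A) ∪ X) : ℝ≥0∞)
    set hh := (er M (S ∪ X) : ℝ≥0∞)
    set ss := (er M S : ℝ≥0∞)
    set a1 := ((A \ X).encard : ℝ≥0∞)
    have h4 : lam * g + (lam * ss + lam * (dq : ℝ≥0∞))
        ≤ (lam * ss + (a1 + lam * (dq : ℝ≥0∞))) + lam * hh :=
      h3.trans (add_le_add (add_le_add_right key2 _) le_rfl)
    have h5 : lam * ss + (lam * (dq : ℝ≥0∞) + lam * g)
        ≤ lam * ss + (lam * (dq : ℝ≥0∞) + (a1 + lam * hh)) := by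
      calc lam * ss + (lam * (dq : ℝ≥0∞) + lam * g)
          = lam * g + (lam * ss + lam * (dq : ℝ≥0∞)) := by ring
        _ ≤ (lam * ss + (a1 + lam * (dq : ℝ≥0∞))) + lam * hh := h4
        _ = lam * ss + (lam * (dq : ℝ≥0∞) + (a1 + lam * hh)) := by ring
    have hsst : lam * ss ≠ ⊤ := ENNReal.mul_ne_top hlt (coe_er_ne_top (er_ne_top M S))
    have hdqt' : lam * (dq : ℝ≥0∞) ≠ ⊤ := ENNReal.mul_ne_top hlt (coe_er_ne_top hdqt)
    have h6 : lam * g ≤ a1 + lam * hh :=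
      (ENNReal.add_le_add_iff_left hdqt').1 ((ENNReal.add_le_add_iff_left hsst).1 h5)
    -- conclude
    have hdisj : Disjoint (S \ X) (A \ X) :=
      (((subset_diff.1 hA).2).symm.mono diff_subset diff_subset)
    have hdiffcard : (((S ∪ A) \ X).encard : ℝ≥0∞) = ((S \ X).encard : ℝ≥0∞) + a1 := by
      rw [union_diff_distrib]
      have := encard_union_eq hdisj
      rw [this]
      push_cast
      rfl
    rw [hpre1]
    calc lam * (er M ((S ∪ A) ∪ X) : ℝ≥0∞) ≤ a1 + lam * hh := h6
      _ ≤ a1 + (((S \ X).encard : ℝ≥0∞) + lam * (er M X : ℝ≥0∞)) := add_le_add_right IH _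
      _ = (((S ∪ A) \ X).encard : ℝ≥0∞) + lam * (er M X : ℝ≥0∞) := by
          rw [hdiffcard]; ring

/-- Absorption: a hereditarily dense set is contained in the corresponding prefix. -/
lemma absorb (hM : Loopless M) (hV : V ⊆ M.E) (hD : IsDensityDecomp (M ↾ V) k U)
    {lam eps : ℝ≥0∞} (hlt : lam ≠ ⊤) {m : ℕ} (hm : m ≤ k)
    (hnext : m = k ∨ (m < k ∧ lvlDens M V U m + eps < lam)) {P : Set α} (hP : P ⊆ V)
    (H : lam * (er M (pre U m ∪ P) : ℝ≥0∞)
      ≤ ((P \ pre U m).encard : ℝ≥0∞) + eps + lam * (er M (pre U m) : ℝ≥0∞)) :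
    P ⊆ pre U m := by
  by_contra hc
  have hYne : (P \ pre U m).Nonempty := diff_nonempty.2 hc
  rcases hnext with rfl | ⟨hmk, hlt2⟩
  · exact hc (hP.trans hD.pre_eq.symm.subset)
  · set ρ := lvlDens M V U m with hρ
    have hρt : ρ ≠ ⊤ := by
      intro h
      rw [h, top_add] at hlt2
      exact not_top_lt hlt2
    set Y := P \ pre U m with hY
    have hYsub : Y ⊆ V \ pre U m := diff_subset_diff_left hP
    set dY := er (contract (M ↾ V) (pre U m)) Y with hdY
    have hadd : er M (pre U m) + dY = er M (pre U m ∪ P) := by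
      have := rk_add hV (hD.pre_subset hmk.le) hYsub
      rwa [hY, diff_union_self, union_comm P (pre U m)] at this
    have hdYt : dY ≠ ⊤ := contract_er_ne_top hV (hD.pre_subset hmk.le) hYsub
    have hdY0 : dY ≠ 0 :=
      nonempty_contract_er_ne_zero hV hD hmk hρt hYsub hYne
    have hrc : (er M (pre U m ∪ P) : ℝ≥0∞) = (er M (pre U m) : ℝ≥0∞) + (dY : ℝ≥0∞) := by
      exact_mod_cast hadd.symm
    rw [hrc, mul_add] at H
    have H2 : lam * (dY : ℝ≥0∞) ≤ (Y.encard : ℝ≥0∞) + eps := by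
      have hsst : lam * (er M (pre U m) : ℝ≥0∞) ≠ ⊤ :=
        ENNReal.mul_ne_top hlt (coe_er_ne_top (er_ne_top M _))
      refine (ENNReal.add_le_add_iff_left hsst).1 ?_
      calc lam * (er M (pre U m) : ℝ≥0∞) + lam * (dY : ℝ≥0∞) ≤
          (Y.encard : ℝ≥0∞) + eps + lam * (er M (pre U m) : ℝ≥0∞) := H
        _ = lam * (er M (pre U m) : ℝ≥0∞) + ((Y.encard : ℝ≥0∞) + eps) := by ring
    have hbY : (Y.encard : ℝ≥0∞) ≤ ρ * (dY : ℝ≥0∞) :=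
      card_le_lvlDens_mul hV hD hmk hρt hYsub
    have h1dY : (1 : ℝ≥0∞) ≤ (dY : ℝ≥0∞) := by
      exact_mod_cast ENat.one_le_iff_ne_zero.2 hdY0
    have hepsY : eps ≤ eps * (dY : ℝ≥0∞) := by
      calc eps = eps * 1 := (mul_one _).symm
        _ ≤ eps * (dY : ℝ≥0∞) := mul_le_mul_right h1dY _
    have hchain : lam * (dY : ℝ≥0∞) < lam * (dY : ℝ≥0∞) := by
      calc lam * (dY : ℝ≥0∞) ≤ (Y.encard : ℝ≥0∞) + eps := H2
        _ ≤ ρ * (dY : ℝ≥0∞) + eps * (dY : ℝ≥0∞) := add_le_add hbY hepsY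
        _ = (ρ + eps) * (dY : ℝ≥0∞) := (add_mul _ _ _).symm
        _ < lam * (dY : ℝ≥0∞) :=
            ENNReal.mul_lt_mul_left (coe_ne_zero hdY0) (coe_er_ne_top hdYt) hlt2
    exact lt_irrefl _ hchain

lemma not_mem_closure_empty (hM : Loopless M) {u : α} (hu : u ∈ M.E) :
    u ∉ M.closure (∅ : Set α) := by
  intro hc
  rcases (M.empty_indep.mem_closure_iff).1 hc with hdep | hmem
  · rw [insert_empty_eq] at hdep
    exact hdep.not_indep (hM u hu)
  · exact hmem

open Classical in
lemma find_nonempty (hM : Loopless M) (hV : V ⊆ M.E) (hD : IsDensityDecomp (M ↾ V) k U)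
    {u : α} (hu : u ∈ M.E)
    (h : ∃ j, j < k ∧ u ∈ M.closure (pre U (j + 1))) : (U (Nat.find h)).Nonempty := by
  have hspec := Nat.find_spec h
  rcases eq_empty_or_nonempty (U (Nat.find h)) with he | hne
  · exfalso
    have hpe : pre U (Nat.find h + 1) = pre U (Nat.find h) := by
      rw [pre_succ, he, union_empty]
    rcases Nat.eq_zero_or_pos (Nat.find h) with h0 | hpos
    · rw [hpe, h0, pre_zero] at hspec
      exact not_mem_closure_empty hM hu hspec.2
    · have hlt : Nat.find h - 1 < Nat.find h := by omega
      refine Nat.find_min h hlt ⟨by omega, ?_⟩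
      rw [show Nat.find h - 1 + 1 = Nat.find h by omega, ← hpe]
      exact hspec.2
  · exact hne

end Decomp

/-- the associated density of a newly inserted element increases by at most 1. -/
theorem assocDens_insert_self (M : Matroid α) [M.Finite] (hM : Loopless M)
    (V' : Set α) (hV' : V' ⊆ M.E) (u : α) (hu : u ∈ M.E) (huV : u ∉ V') (k : ℕ)
    (Uold Unew : ℕ → Set α)
    (hold : IsDensityDecomp (M ↾ V') k Uold)
    (hnew : IsDensityDecomp (M ↾ (insert u V')) k Unew) :
    assocDens M V' k Uold u ≤ assocDens M (insert u V') k Unew u ∧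
      assocDens M (insert u V') k Unew u ≤ assocDens M V' k Uold u + 1 := by
  classical
  have hVE : insert u V' ⊆ M.E := insert_subset hu hV'
  have hk : 0 < k := by
    by_contra h
    have h0 : k = 0 := by omega
    have hpe := hnew.pre_eq
    rw [h0, pre_zero] at hpe
    exact (insert_nonempty u V').ne_empty hpe.symm
  have hnewex : ∃ j, j < k ∧ u ∈ M.closure (pre Unew (j + 1)) := by
    refine ⟨k - 1, by omega, ?_⟩
    rw [show k - 1 + 1 = k by omega, hnew.pre_eq]
    exact M.subset_closure _ hVE (mem_insert u V')
  have hspec1 := Nat.find_spec hnewex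
  have hANew : assocDens M (insert u V') k Unew u
      = lvlDens M (insert u V') Unew (Nat.find hnewex) := assocDens_eq_lvlDens hnewex
  set j1 := Nat.find hnewex with hj1def
  set σ := lvlDens M (insert u V') Unew j1 with hσdef
  have hj1k : j1 < k := hspec1.1
  have hσt : σ ≠ ⊤ := lvlDens_ne_top hM hVE hnew j1 hj1k
  constructor
  · -- lower bound
    by_cases hex_old : ∃ j, j < k ∧ u ∈ M.closure (pre Uold (j + 1))
    · rw [assocDens_eq_lvlDens hex_old, hANew]
      have hspec0 := Nat.find_spec hex_old
      set j0 := Nat.find hex_old with hj0def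
      set ρ := lvlDens M V' Uold j0 with hρdef
      have hj0k : j0 < k := hspec0.1
      have hρt : ρ ≠ ⊤ := lvlDens_ne_top hM hV' hold j0 hj0k
      obtain ⟨m, hmk, hmall, hmnext⟩ :=
        exists_cut k (fun i => lvlDens M (insert u V') Unew i + 0 < ρ)
      have hH := hered hM hV' hold hρt (show j0 + 1 ≤ k from hj0k)
        (fun i hi => lvl_antitone hM hV' hold (Nat.lt_succ_iff.1 hi) hj0k)
        (X := pre Unew m) ((hnew.pre_subset hmk).trans hVE)
      have hPV : pre Uold (j0 + 1) ⊆ insert u V' :=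
        (hold.pre_subset hj0k).trans (subset_insert u V')
      have hsubP : pre Uold (j0 + 1) ⊆ pre Unew m := by
        refine absorb hM hVE hnew hρt hmk hmnext hPV ?_
        rw [add_zero, union_comm]
        exact hH
      have hPne : (pre Uold (j0 + 1)).Nonempty := by
        obtain ⟨v, hv⟩ := find_nonempty hM hV' hold hu hex_old
        exact ⟨v, by rw [pre_succ]; exact Or.inr hv⟩
      have hm1 : 1 ≤ m := by
        by_contra h
        have h0 : m = 0 := by omega
        rw [h0, pre_zero] at hsubP
        exact hPne.ne_empty (subset_empty_iff.1 hsubP)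
      have hucl : u ∈ M.closure (pre Unew m) :=
        M.closure_subset_closure hsubP hspec0.2
      have hj1m : j1 < m := by
        have hfm := Nat.find_min' hnewex (m := m - 1)
          ⟨by omega, by rw [show m - 1 + 1 = m by omega]; exact hucl⟩
        omega
      have hn := hmall j1 hj1m
      rw [add_zero] at hn
      exact not_lt.1 hn
    · rw [assocDens, dif_neg hex_old]
      exact zero_le
  · -- upper bound
    by_cases hσ1 : σ ≤ 1
    · rw [hANew]
      exact hσ1.trans le_add_self
    · push_neg at hσ1
      rw [hANew]
      have hQT : pre Unew (j1 + 1) = pre Unew j1 ∪ Unew j1 := pre_succ Unew j1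
      have hucl : u ∈ M.closure (pre Unew (j1 + 1)) := hspec1.2
      have hQV : pre Unew (j1 + 1) ⊆ insert u V' := hnew.pre_subset hj1k
      by_cases huQ : u ∈ pre Unew (j1 + 1)
      · -- case B : u lies in the new prefix, in fact in the level piece
        have hBsub : Unew j1 ⊆ (insert u V') \ pre Unew j1 := hnew.piece_subset hj1k
        have huB : u ∈ Unew j1 := by
          obtain ⟨i, hi, hui⟩ := mem_pre.1 huQ
          rcases eq_or_lt_of_le (Nat.lt_succ_iff.1 hi) with heq | hlt
          · exact heq ▸ hui
          · exfalso
            refine Nat.find_min hnewex hlt ⟨hlt.trans hj1k, ?_⟩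
            refine M.subset_closure _ ((hnew.pre_subset (by omega)).trans hVE) ?_
            exact mem_pre.2 ⟨i, Nat.lt_succ_self i, hui⟩
        have huT : u ∉ pre Unew j1 := (hBsub huB).2
        set Z := pre Unew j1 ∪ (Unew j1 \ {u}) with hZ
        have hZV : Z ⊆ insert u V' :=
          union_subset (hnew.pre_subset hj1k.le) (diff_subset.trans (hBsub.trans diff_subset))
        have hZE : Z ⊆ M.E := hZV.trans hVE
        have hins : insert u Z = pre Unew j1 ∪ Unew j1 := by
          rw [hZ]
          ext x
          simp only [mem_insert_iff, mem_union, mem_diff, mem_singleton_iff]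
          constructor
          · rintro (rfl | h | ⟨h, _⟩)
            · exact Or.inr huB
            · exact Or.inl h
            · exact Or.inr h
          · rintro (h | h)
            · exact Or.inr (Or.inl h)
            · by_cases hxu : x = u
              · exact Or.inl hxu
              · exact Or.inr (Or.inr ⟨h, hxu⟩)
        have hstep1 : u ∈ M.closure Z := by
          by_contra hnc
          have hrk := er_insert_of_not_mem_closure hu hZE hnc
          rw [hins, ← hQT] at hrk
          have hB'sub : Unew j1 \ {u} ⊆ (insert u V') \ pre Unew j1 :=
            diff_subset.trans hBsub
          have haddB := rk_add hVE (hnew.pre_subset hj1k.le) hBsub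
          have haddB' := rk_add hVE (hnew.pre_subset hj1k.le) hB'sub
          set dB := er (contract (M ↾ (insert u V')) (pre Unew j1)) (Unew j1) with hdB
          set dB' := er (contract (M ↾ (insert u V')) (pre Unew j1)) (Unew j1 \ {u}) with hdB'
          have hcomb : er M (pre Unew j1) + dB = er M (pre Unew j1) + (dB' + 1) := by
            rw [haddB, show Unew j1 ∪ pre Unew j1 = pre Unew (j1 + 1) by
              rw [hQT, union_comm], hrk, show Z = (Unew j1 \ {u}) ∪ pre Unew j1 by
              rw [hZ, union_comm], ← haddB', add_assoc]
          have hdd : dB = dB' + 1 := WithTop.add_left_cancel (er_ne_top M _) hcomb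
          have hdB't : dB' ≠ ⊤ := contract_er_ne_top hVE (hnew.pre_subset hj1k.le) hB'sub
          have hlevB : σ * (dB : ℝ≥0∞) = ((Unew j1).encard : ℝ≥0∞) :=
            lvl_mul hM hVE hnew hj1k
          have hbB' : (((Unew j1 \ {u}).encard : ℝ≥0∞)) ≤ σ * (dB' : ℝ≥0∞) :=
            card_le_lvlDens_mul hVE hnew hj1k hσt hB'sub
          have hcB : ((Unew j1).encard : ℝ≥0∞) = ((Unew j1 \ {u}).encard : ℝ≥0∞) + 1 := by
            have := encard_diff_singleton_add_one huB
            exact_mod_cast this.symm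
          have hσle : σ * (dB' : ℝ≥0∞) + σ ≤ σ * (dB' : ℝ≥0∞) + 1 := by
            calc σ * (dB' : ℝ≥0∞) + σ = σ * ((dB' : ℝ≥0∞) + 1) := by ring
              _ = σ * (dB : ℝ≥0∞) := by
                  congr 1
                  rw [hdd]
                  push_cast
                  rfl
              _ = ((Unew j1).encard : ℝ≥0∞) := hlevB
              _ = ((Unew j1 \ {u}).encard : ℝ≥0∞) + 1 := hcB
              _ ≤ σ * (dB' : ℝ≥0∞) + 1 := add_le_add_left hbB' 1
          have hle1 : σ ≤ 1 :=
            (ENNReal.add_le_add_iff_left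
              (ENNReal.mul_ne_top hσt (coe_er_ne_top hdB't))).1 hσle
          exact absurd hle1 (not_le.2 hσ1)
        obtain ⟨m', hm'k, hm'all, hm'next⟩ :=
          exists_cut k (fun i => lvlDens M V' Uold i + 1 < σ)
        have hT'E : pre Uold m' ⊆ M.E := (hold.pre_subset hm'k).trans hV'
        have hHer := hered hM hVE hnew hσt (show j1 + 1 ≤ k from hj1k)
          (fun i hi => lvl_antitone hM hVE hnew (Nat.lt_succ_iff.1 hi) hj1k)
          (X := pre Uold m') hT'E
        have hQ'V : pre Unew (j1 + 1) \ {u} ⊆ V' := by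
          intro x hx
          rcases hQV hx.1 with rfl | h
          · exact absurd rfl hx.2
          · exact h
        have huT' : u ∉ pre Uold m' := fun hc => huV ((hold.pre_subset hm'k) hc)
        have hcardQ : (((pre Unew (j1 + 1)) \ pre Uold m').encard : ℝ≥0∞)
            = (((pre Unew (j1 + 1) \ {u}) \ pre Uold m').encard : ℝ≥0∞) + 1 := by
          have hQd : (pre Unew (j1 + 1)) \ pre Uold m'
              = insert u ((pre Unew (j1 + 1) \ {u}) \ pre Uold m') := by
            ext x
            simp only [mem_diff, mem_insert_iff, mem_singleton_iff]
            constructor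
            · rintro ⟨hx, hnx⟩
              by_cases hxu : x = u
              · exact Or.inl hxu
              · exact Or.inr ⟨⟨hx, hxu⟩, hnx⟩
            · rintro (rfl | ⟨⟨hx, _⟩, hnx⟩)
              · exact ⟨huQ, huT'⟩
              · exact ⟨hx, hnx⟩
          rw [hQd]
          have := encard_insert_of_notMem
            (show u ∉ (pre Unew (j1 + 1) \ {u}) \ pre Uold m' from
              fun hc => hc.1.2 rfl)
          exact_mod_cast this
        have hH2 : σ * (er M (pre Uold m' ∪ (pre Unew (j1 + 1) \ {u})) : ℝ≥0∞)
            ≤ (((pre Unew (j1 + 1) \ {u}) \ pre Uold m').encard : ℝ≥0∞) + 1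
              + σ * (er M (pre Uold m') : ℝ≥0∞) := by
          have hmono : (er M (pre Uold m' ∪ (pre Unew (j1 + 1) \ {u})) : ℝ≥0∞)
              ≤ (er M (pre Unew (j1 + 1) ∪ pre Uold m') : ℝ≥0∞) := by
            have := er_mono M (show pre Uold m' ∪ (pre Unew (j1 + 1) \ {u})
                ⊆ pre Unew (j1 + 1) ∪ pre Uold m' from
              union_subset subset_union_right (diff_subset.trans subset_union_left))
            exact_mod_cast this
          calc σ * (er M (pre Uold m' ∪ (pre Unew (j1 + 1) \ {u})) : ℝ≥0∞)
              ≤ σ * (er M (pre Unew (j1 + 1) ∪ pre Uold m') : ℝ≥0∞) :=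
                mul_le_mul_right hmono σ
            _ ≤ ((pre Unew (j1 + 1) \ pre Uold m').encard : ℝ≥0∞)
                + σ * (er M (pre Uold m') : ℝ≥0∞) := hHer
            _ = (((pre Unew (j1 + 1) \ {u}) \ pre Uold m').encard : ℝ≥0∞) + 1
                + σ * (er M (pre Uold m') : ℝ≥0∞) := by rw [hcardQ]
        have hsubQ' : pre Unew (j1 + 1) \ {u} ⊆ pre Uold m' := by
          exact absorb hM hV' hold hσt hm'k hm'next (eps := 1) hQ'V hH2
        have hZQ' : Z = pre Unew (j1 + 1) \ {u} := by
          rw [hZ, hQT]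
          ext x
          simp only [mem_union, mem_diff, mem_singleton_iff]
          constructor
          · rintro (h | ⟨h, hne⟩)
            · exact ⟨Or.inl h, fun hc => huT (hc ▸ h)⟩
            · exact ⟨Or.inr h, hne⟩
          · rintro ⟨h | h, hne⟩
            · exact Or.inl h
            · exact Or.inr ⟨h, hne⟩
        have huclT' : u ∈ M.closure (pre Uold m') :=
          M.closure_subset_closure hsubQ' (hZQ' ▸ hstep1)
        have hm'1 : 1 ≤ m' := by
          by_contra h
          have h0 : m' = 0 := by omega
          rw [h0, pre_zero] at huclT'
          exact not_mem_closure_empty hM hu huclT'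
        have hex_old : ∃ j, j < k ∧ u ∈ M.closure (pre Uold (j + 1)) :=
          ⟨m' - 1, by omega, by rw [show m' - 1 + 1 = m' by omega]; exact huclT'⟩
        rw [assocDens_eq_lvlDens hex_old]
        have hj0m : Nat.find hex_old < m' := by
          have hfm := Nat.find_min' hex_old (m := m' - 1)
            ⟨by omega, by rw [show m' - 1 + 1 = m' by omega]; exact huclT'⟩
          omega
        exact not_lt.1 (hm'all _ hj0m)
      · -- case A : u not in the new prefix
        have hQV' : pre Unew (j1 + 1) ⊆ V' := by
          intro x hx
          rcases hQV hx with rfl | h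
          · exact absurd hx huQ
          · exact h
        obtain ⟨m', hm'k, hm'all, hm'next⟩ :=
          exists_cut k (fun i => lvlDens M V' Uold i + 0 < σ)
        have hT'E : pre Uold m' ⊆ M.E := (hold.pre_subset hm'k).trans hV'
        have hHer := hered hM hVE hnew hσt (show j1 + 1 ≤ k from hj1k)
          (fun i hi => lvl_antitone hM hVE hnew (Nat.lt_succ_iff.1 hi) hj1k)
          (X := pre Uold m') hT'E
        have hsubQ : pre Unew (j1 + 1) ⊆ pre Uold m' := by
          refine absorb hM hV' hold hσt hm'k hm'next (eps := 0) hQV' ?_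
          rw [add_zero, union_comm]
          exact hHer
        have huclT' : u ∈ M.closure (pre Uold m') :=
          M.closure_subset_closure hsubQ hucl
        have hm'1 : 1 ≤ m' := by
          by_contra h
          have h0 : m' = 0 := by omega
          rw [h0, pre_zero] at huclT'
          exact not_mem_closure_empty hM hu huclT'
        have hex_old : ∃ j, j < k ∧ u ∈ M.closure (pre Uold (j + 1)) :=
          ⟨m' - 1, by omega, by rw [show m' - 1 + 1 = m' by omega]; exact huclT'⟩
        rw [assocDens_eq_lvlDens hex_old]
        have hj0m : Nat.find hex_old < m' := by
          have hfm := Nat.find_min' hex_old (m := m' - 1)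
            ⟨by omega, by rw [show m' - 1 + 1 = m' by omega]; exact huclT'⟩
          omega
        have hn := hm'all _ hj0m
        rw [add_zero] at hn
        exact le_trans (not_lt.1 hn) le_self_add

end MatroidDCS
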